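/- (The Janet sequence is a complex) Assume R̂ = 0 on U. Then d̂₁∘d̂₀ = 0 and d̂₂∘d̂₁ = 0: for every smooth vector field ξ on U, (d̂₁(d̂₀ξ))^i_{kj} = 0 identically, and for every smooth (1,1)-tensor field η on U, (d̂₂(d̂₁η))^i_{rkj} = 0 identically. -/

import Mathlib

/-- Partial derivative ∂_j f at x. -/
noncomputable def pd {n : ℕ} (f : (Fin n → ℝ) → ℝ) (j : Fin n) (x : Fin n → ℝ) : ℝ :=
  fderiv ℝ f x (Pi.single j 1)

/-- The curvature `R̂^i_{rj,k}`. -/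
noncomputable def Rhat {n : ℕ} (Γ : Fin n → Fin n → Fin n → (Fin n → ℝ) → ℝ)
    (i r j k : Fin n) (x : Fin n → ℝ) : ℝ :=
  pd (Γ i k j) r x - pd (Γ i k r) j x
    + ∑ a, (Γ a k r x * Γ i a j x - Γ a k j x * Γ i a r x)

/-- Janet operator `(d̂₀ξ)^i_j = ∂_j ξ^i − ∑_a Γ^i_{aj} ξ^a`. -/
noncomputable def d0 {n : ℕ} (Γ : Fin n → Fin n → Fin n → (Fin n → ℝ) → ℝ)
    (ξ : (Fin n → ℝ) → Fin n → ℝ) (x : Fin n → ℝ) (i j : Fin n) : ℝ :=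
  pd (fun y => ξ y i) j x - ∑ a, Γ i a j x * ξ x a

/-- Janet operator `(d̂₁η)^i_{kj} = ∂_k η^i_j − ∂_j η^i_k − ∑_a Γ^i_{ak} η^a_j + ∑_a Γ^i_{aj} η^a_k`. -/
noncomputable def d1 {n : ℕ} (Γ : Fin n → Fin n → Fin n → (Fin n → ℝ) → ℝ)
    (η : (Fin n → ℝ) → Fin n → Fin n → ℝ) (x : Fin n → ℝ) (i k j : Fin n) : ℝ :=
  pd (fun y => η y i j) k x - pd (fun y => η y i k) j x
    - ∑ a, Γ i a k x * η x a j + ∑ a, Γ i a j x * η x a k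

/-- `D_r φ^i_{kj} = ∂_r φ^i_{kj} − ∑_a Γ^i_{ar} φ^a_{kj}`. -/
noncomputable def Dop {n : ℕ} (Γ : Fin n → Fin n → Fin n → (Fin n → ℝ) → ℝ)
    (φ : (Fin n → ℝ) → Fin n → Fin n → Fin n → ℝ) (x : Fin n → ℝ) (r i k j : Fin n) : ℝ :=
  pd (fun y => φ y i k j) r x - ∑ a, Γ i a r x * φ x a k j

/-- Janet operator `(d̂₂φ)^i_{rkj} = D_r φ^i_{kj} − D_k φ^i_{rj} − D_j φ^i_{kr}`. -/
noncomputable def d2 {n : ℕ} (Γ : Fin n → Fin n → Fin n → (Fin n → ℝ) → ℝ)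
    (φ : (Fin n → ℝ) → Fin n → Fin n → Fin n → ℝ) (x : Fin n → ℝ) (i r k j : Fin n) : ℝ :=
  Dop Γ φ x r i k j - Dop Γ φ x k i r j - Dop Γ φ x j i k r

section JanetHelpers

variable {n : ℕ} {x : Fin n → ℝ} {f g : (Fin n → ℝ) → ℝ} {j k : Fin n}

lemma pd_sub' (hf : DifferentiableAt ℝ f x) (hg : DifferentiableAt ℝ g x) :
    pd (fun y => f y - g y) j x = pd f j x - pd g j x := by
  simp [pd, fderiv_fun_sub hf hg]

lemma pd_add' (hf : DifferentiableAt ℝ f x) (hg : DifferentiableAt ℝ g x) :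
    pd (fun y => f y + g y) j x = pd f j x + pd g j x := by
  simp [pd, fderiv_fun_add hf hg]

lemma pd_mul' (hf : DifferentiableAt ℝ f x) (hg : DifferentiableAt ℝ g x) :
    pd (fun y => f y * g y) j x = pd f j x * g x + f x * pd g j x := by
  simp [pd, fderiv_fun_mul hf hg]; ring

lemma pd_sum' {ι : Type*} (s : Finset ι) {F : ι → (Fin n → ℝ) → ℝ}
    (h : ∀ a ∈ s, DifferentiableAt ℝ (F a) x) :
    pd (fun y => ∑ a ∈ s, F a y) j x = ∑ a ∈ s, pd (F a) j x := by
  simp [pd, fderiv_fun_sum h]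

lemma diff_pd' (h : ContDiffAt ℝ 2 f x) : DifferentiableAt ℝ (fun y => pd f j y) x := by
  have h1 : ContDiffAt ℝ 1 (fderiv ℝ f) x := h.fderiv_right (by norm_num)
  exact (h1.differentiableAt one_ne_zero).clm_apply (differentiableAt_const _)

/-- Symmetry of second partial derivatives for `C²` functions (Schwarz). -/
lemma pd_comm' (h : ContDiffAt ℝ 2 f x) :
    pd (fun y => pd f j y) k x = pd (fun y => pd f k y) j x := by
  have hd : DifferentiableAt ℝ (fderiv ℝ f) x :=
    (h.fderiv_right (m := 1) (by norm_num)).differentiableAt one_ne_zero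
  have key : ∀ v w : Fin n → ℝ,
      fderiv ℝ (fun y => fderiv ℝ f y v) x w = fderiv ℝ (fderiv ℝ f) x w v := by
    intro v w
    rw [fderiv_clm_apply hd (differentiableAt_const v)]
    simp
  simp only [pd]
  rw [key, key, (h.isSymmSndFDerivAt (by norm_num)).eq]

lemma sum_mul_swap' (G : Fin n → ℝ) (H : Fin n → Fin n → ℝ) (Y : Fin n → ℝ) :
    ∑ a, G a * ∑ b, H a b * Y b = ∑ a, (∑ b, H b a * G b) * Y a := by
  simp only [Finset.mul_sum]
  rw [Finset.sum_comm]
  refine Finset.sum_congr rfl fun a _ => ?_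
  rw [Finset.sum_mul]
  exact Finset.sum_congr rfl fun b _ => by ring

end JanetHelpers

/-- The Janet sequence is a complex: if R̂ = 0 on U, then d̂₁∘d̂₀ = 0 and d̂₂∘d̂₁ = 0 on U. -/
theorem stmt11 {n : ℕ} (hn : 1 ≤ n) (U : Set (Fin n → ℝ)) (hU : IsOpen U)
    (Γ : Fin n → Fin n → Fin n → (Fin n → ℝ) → ℝ)
    (hΓ : ∀ i k j, ContDiffOn ℝ (⊤ : ℕ∞) (Γ i k j) U)
    (hRh : ∀ x ∈ U, ∀ i r j k, Rhat Γ i r j k x = 0)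
    (ξ : (Fin n → ℝ) → Fin n → ℝ) (hξ : ContDiffOn ℝ (⊤ : ℕ∞) ξ U)
    (η : (Fin n → ℝ) → Fin n → Fin n → ℝ)
    (hη : ∀ i j, ContDiffOn ℝ (⊤ : ℕ∞) (fun y => η y i j) U) :
    (∀ x ∈ U, ∀ i k j, d1 Γ (fun y => d0 Γ ξ y) x i k j = 0)
    ∧ (∀ x ∈ U, ∀ i r k j, d2 Γ (fun y => d1 Γ η y) x i r k j = 0) := by
  constructor
  · -- d̂₁ ∘ d̂₀ = 0
    intro x hx i k j
    have hmem := hU.mem_nhds hx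
    have hΓ2 : ∀ i a j, ContDiffAt ℝ 2 (Γ i a j) x :=
      fun i a j => ((hΓ i a j).contDiffAt hmem).of_le (WithTop.coe_le_coe.mpr le_top)
    have dΓ : ∀ i a j, DifferentiableAt ℝ (Γ i a j) x :=
      fun i a j => (hΓ2 i a j).differentiableAt two_ne_zero
    have hξ2 : ∀ a, ContDiffAt ℝ 2 (fun y => ξ y a) x :=
      fun a => (contDiffAt_pi.mp (hξ.contDiffAt hmem) a).of_le (WithTop.coe_le_coe.mpr le_top)
    have dξ : ∀ a, DifferentiableAt ℝ (fun y => ξ y a) x :=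
      fun a => (hξ2 a).differentiableAt two_ne_zero
    have dPd : ∀ a j', DifferentiableAt ℝ (fun y => pd (fun z => ξ z a) j' y) x :=
      fun a j' => diff_pd' (hξ2 a)
    simp only [d1, d0]
    have expand : ∀ (j' k' : Fin n),
        pd (fun y => pd (fun z => ξ z i) j' y - ∑ a, Γ i a j' y * ξ y a) k' x
        = pd (fun y => pd (fun z => ξ z i) j' y) k' x
          - ∑ a, (pd (Γ i a j') k' x * ξ x a + Γ i a j' x * pd (fun z => ξ z a) k' x) := by
      intro j' k'
      rw [pd_sub' (dPd i j') (DifferentiableAt.fun_sum fun a _ => (dΓ i a j').fun_mul (dξ a)),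
          pd_sum' _ (fun a _ => (dΓ i a j').fun_mul (dξ a))]
      congr 1
      exact Finset.sum_congr rfl fun a _ => pd_mul' (dΓ i a j') (dξ a)
    rw [expand j k, expand k j, pd_comm' (j := j) (k := k) (hξ2 i)]
    simp only [mul_sub, Finset.sum_sub_distrib, Finset.sum_add_distrib]
    rw [sum_mul_swap' (fun a => Γ i a k x) (fun a b => Γ a b j x) (fun b => ξ x b),
        sum_mul_swap' (fun a => Γ i a j x) (fun a b => Γ a b k x) (fun b => ξ x b)]
    have H : ∑ a, ((pd (Γ i a j) k x - pd (Γ i a k) j x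
        + ((∑ b, Γ b a k x * Γ i b j x) - ∑ b, Γ b a j x * Γ i b k x)) * ξ x a) = 0 := by
      refine Finset.sum_eq_zero fun a _ => ?_
      have h0 := hRh x hx i k j a
      simp only [Rhat, Finset.sum_sub_distrib] at h0
      linear_combination ξ x a * h0
    simp only [add_mul, sub_mul, Finset.sum_add_distrib, Finset.sum_sub_distrib] at H
    linear_combination -H
  · -- d̂₂ ∘ d̂₁ = 0
    intro x hx i r k j
    have hmem := hU.mem_nhds hx
    have hΓ2 : ∀ i a j, ContDiffAt ℝ 2 (Γ i a j) x :=
      fun i a j => ((hΓ i a j).contDiffAt hmem).of_le (WithTop.coe_le_coe.mpr le_top)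
    have dΓ : ∀ i a j, DifferentiableAt ℝ (Γ i a j) x :=
      fun i a j => (hΓ2 i a j).differentiableAt two_ne_zero
    have hη2 : ∀ a b, ContDiffAt ℝ 2 (fun y => η y a b) x :=
      fun a b => ((hη a b).contDiffAt hmem).of_le (WithTop.coe_le_coe.mpr le_top)
    have dη : ∀ a b, DifferentiableAt ℝ (fun y => η y a b) x :=
      fun a b => (hη2 a b).differentiableAt two_ne_zero
    have dPη : ∀ a b c, DifferentiableAt ℝ (fun y => pd (fun z => η z a b) c y) x :=
      fun a b c => diff_pd' (hη2 a b)
    have dprod : ∀ i' a k' j', DifferentiableAt ℝ (fun y => Γ i' a k' y * η y a j') x :=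
      fun i' a k' j' => (dΓ i' a k').mul (dη a j')
    simp only [d2, Dop, d1]
    have expand2 : ∀ (i' k' j' r' : Fin n),
        pd (fun y => pd (fun z => η z i' j') k' y - pd (fun z => η z i' k') j' y
              - ∑ a, Γ i' a k' y * η y a j' + ∑ a, Γ i' a j' y * η y a k') r' x
        = pd (fun y => pd (fun z => η z i' j') k' y) r' x
          - pd (fun y => pd (fun z => η z i' k') j' y) r' x
          - ∑ a, (pd (Γ i' a k') r' x * η x a j' + Γ i' a k' x * pd (fun z => η z a j') r' x)
          + ∑ a, (pd (Γ i' a j') r' x * η x a k' + Γ i' a j' x * pd (fun z => η z a k') r' x) := by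
      intro i' k' j' r'
      rw [pd_add' (((dPη i' j' k').fun_sub (dPη i' k' j')).fun_sub
            (DifferentiableAt.fun_sum fun a _ => dprod i' a k' j'))
            (DifferentiableAt.fun_sum fun a _ => dprod i' a j' k'),
          pd_sub' ((dPη i' j' k').fun_sub (dPη i' k' j'))
            (DifferentiableAt.fun_sum fun a _ => dprod i' a k' j'),
          pd_sub' (dPη i' j' k') (dPη i' k' j'),
          pd_sum' _ (fun a _ => dprod i' a k' j'), pd_sum' _ (fun a _ => dprod i' a j' k'),
          show (∑ a, pd (fun y => Γ i' a k' y * η y a j') r' x)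
              = ∑ a, (pd (Γ i' a k') r' x * η x a j' + Γ i' a k' x * pd (fun z => η z a j') r' x)
            from Finset.sum_congr rfl fun a _ => pd_mul' (dΓ i' a k') (dη a j'),
          show (∑ a, pd (fun y => Γ i' a j' y * η y a k') r' x)
              = ∑ a, (pd (Γ i' a j') r' x * η x a k' + Γ i' a j' x * pd (fun z => η z a k') r' x)
            from Finset.sum_congr rfl fun a _ => pd_mul' (dΓ i' a j') (dη a k')]
    rw [expand2 i k j r, expand2 i r j k, expand2 i k r j,
        pd_comm' (j := k) (k := r) (hη2 i j),
        pd_comm' (j := j) (k := r) (hη2 i k),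
        pd_comm' (j := j) (k := k) (hη2 i r)]
    simp only [mul_sub, mul_add, Finset.sum_sub_distrib, Finset.sum_add_distrib]
    rw [sum_mul_swap' (fun a => Γ i a r x) (fun a b => Γ a b k x) (fun b => η x b j),
        sum_mul_swap' (fun a => Γ i a r x) (fun a b => Γ a b j x) (fun b => η x b k),
        sum_mul_swap' (fun a => Γ i a k x) (fun a b => Γ a b r x) (fun b => η x b j),
        sum_mul_swap' (fun a => Γ i a k x) (fun a b => Γ a b j x) (fun b => η x b r),
        sum_mul_swap' (fun a => Γ i a j x) (fun a b => Γ a b k x) (fun b => η x b r),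
        sum_mul_swap' (fun a => Γ i a j x) (fun a b => Γ a b r x) (fun b => η x b k)]
    have mk : ∀ (p q : Fin n) (Y : Fin n → ℝ),
        (∀ a, Rhat Γ i p q a x = 0) →
        ∑ a, ((pd (Γ i a q) p x - pd (Γ i a p) q x
          + ((∑ b, Γ b a p x * Γ i b q x) - ∑ b, Γ b a q x * Γ i b p x)) * Y a) = 0 := by
      intro p q Y h
      refine Finset.sum_eq_zero fun a _ => ?_
      have h0 := h a
      simp only [Rhat, Finset.sum_sub_distrib] at h0
      linear_combination Y a * h0
    have H1 := mk r k (fun a => η x a j) (fun a => hRh x hx i r k a)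
    have H2 := mk r j (fun a => η x a k) (fun a => hRh x hx i r j a)
    have H3 := mk k j (fun a => η x a r) (fun a => hRh x hx i k j a)
    simp only [add_mul, sub_mul, Finset.sum_add_distrib, Finset.sum_sub_distrib] at H1 H2 H3
    linear_combination H2 - H1 - H3
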